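/- arXiv:1705.04007 — 3 statements merged into one kernel-verified Lean document; each statement's English description precedes it below -/
import Mathlib

section
/- Let $T$ be a nonsingular $n\times n$ complex matrix with positive definite imaginary part, $A$ an $n\times n$ integer matrix with $AT$ symmetric, and $\mathcal{A} := \{(T-\bar{T})^{-1}\}^t \bar{T}^t A^t (T-\bar{T})^{-1}$. Then the matrix $\mathcal{A}T$ has real entries, i.e., $\mathcal{A}T = \overline{\mathcal{A}T}$. -/
open Matrix Complex Real

/-- Identity (t5) in the proof of Theorem 3.6: the matrix `𝒜T` has real entries,
i.e. `𝒜T = conj(𝒜T)`, where `𝒜 := {(T-T̄)⁻¹}ᵀ T̄ᵀ Aᵀ (T-T̄)⁻¹` and `AT` is symmetric. -/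
theorem stmt7 {n : ℕ} (hn : 0 < n)
    (T : Matrix (Fin n) (Fin n) ℂ) (hT : IsUnit T.det)
    (hY : Matrix.PosDef (Matrix.of fun i j => (T i j).im))
    (A : Matrix (Fin n) (Fin n) ℤ)
    (Ac : Matrix (Fin n) (Fin n) ℂ) (hAc : Ac = A.map (Int.cast : ℤ → ℂ))
    (hAT : (Ac * T).IsSymm)
    (Tbar : Matrix (Fin n) (Fin n) ℂ) (hTbar : Tbar = T.map (starRingEnd ℂ))
    (𝒜 : Matrix (Fin n) (Fin n) ℂ)
    (h𝒜 : 𝒜 = ((T - Tbar)⁻¹)ᵀ * Tbarᵀ * Acᵀ * (T - Tbar)⁻¹) :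
    𝒜 * T = (𝒜 * T).map (starRingEnd ℂ) := by
  set c := starRingEnd ℂ with hc
  set D := T - Tbar with hD
  -- D = (2i) • (Y.map ofReal)
  have hDeq : D = ((2 : ℂ) * Complex.I) •
      ((Matrix.of fun i j => (T i j).im).map (Complex.ofRealHom : ℝ →+* ℂ)) := by
    ext i j
    simp only [hD, hTbar, Matrix.sub_apply, Matrix.map_apply, Matrix.smul_apply,
      Matrix.of_apply, smul_eq_mul]
    rw [Complex.sub_conj]
    push_cast
    simp [Complex.ofRealHom_eq_coe]
    ring
  have hDdet : IsUnit D.det := by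
    rw [hDeq, Matrix.det_smul]
    have hmd : ((Matrix.of fun i j => (T i j).im).map (Complex.ofRealHom : ℝ →+* ℂ)).det
        = Complex.ofRealHom (Matrix.of fun i j => (T i j).im).det :=
      ((Complex.ofRealHom : ℝ →+* ℂ).map_det _).symm
    rw [hmd]
    have hYdet : (0 : ℝ) < (Matrix.of fun i j => (T i j).im).det := hY.det_pos
    refine (IsUnit.mul ?_ ?_)
    · exact isUnit_iff_ne_zero.2 (pow_ne_zero _ (by simp [Complex.ext_iff]))
    · exact isUnit_iff_ne_zero.2 (by simpa using hYdet.ne')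
  -- conjugation facts
  have hAcc : Ac.map c = Ac := by
    subst hAc; ext i j; simp [c, Matrix.map_apply]
  have hTbarc : Tbar.map c = T := by
    subst hTbar; ext i j; simp [c, Matrix.map_apply]
  have hTc : T.map c = Tbar := hTbar.symm
  have hDc : D.map c = -D := by
    have : D.map c = Tbar - T := by
      rw [hD]
      ext i j
      simp [Matrix.map_apply, hTbar, c]
    rw [this, hD]; abel
  -- conj commutes with inverse
  have hDinvc : (D⁻¹).map c = (D.map c)⁻¹ := by
    symm
    apply Matrix.inv_eq_right_inv
    rw [← Matrix.map_mul, Matrix.mul_nonsing_inv D hDdet]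
    ext i j
    simp [Matrix.map_apply, Matrix.one_apply, c, apply_ite]
  have hnegDinv : (-D)⁻¹ = -(D⁻¹) := by
    apply Matrix.inv_eq_right_inv
    rw [neg_mul_neg, Matrix.mul_nonsing_inv D hDdet]
  -- symmetry facts
  have hsymm : Tᵀ * Acᵀ = Ac * T := by
    rw [← Matrix.transpose_mul]; exact hAT
  have hsymm' : Tbarᵀ * Acᵀ = Ac * Tbar := by
    have : ((Ac * T)ᵀ).map c = ((Ac * T)).map c := by rw [hAT]
    calc Tbarᵀ * Acᵀ = (T.map c)ᵀ * (Ac.map c)ᵀ := by rw [hTc, hAcc]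
      _ = (Tᵀ.map c) * (Acᵀ.map c) := by rw [Matrix.transpose_map, Matrix.transpose_map]
      _ = (Tᵀ * Acᵀ).map c := by rw [Matrix.map_mul]
      _ = ((Ac * T)ᵀ).map c := by rw [Matrix.transpose_mul]
      _ = (Ac * T).map c := by rw [hAT]
      _ = (Ac.map c) * (T.map c) := by rw [Matrix.map_mul]
      _ = Ac * Tbar := by rw [hAcc, hTc]
  -- core identity
  have hcore : Tbar * D⁻¹ * T = T * D⁻¹ * Tbar := by
    have hT' : T = D + Tbar := by rw [hD]; abel
    calc Tbar * D⁻¹ * T = Tbar * D⁻¹ * (D + Tbar) := by rw [← hT']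
      _ = Tbar * (D⁻¹ * D) + Tbar * D⁻¹ * Tbar := by noncomm_ring
      _ = Tbar + Tbar * D⁻¹ * Tbar := by
          rw [Matrix.nonsing_inv_mul D hDdet, Matrix.mul_one]
      _ = (D * D⁻¹) * Tbar + Tbar * D⁻¹ * Tbar := by
          rw [Matrix.mul_nonsing_inv D hDdet, Matrix.one_mul]
      _ = (D + Tbar) * D⁻¹ * Tbar := by noncomm_ring
      _ = T * D⁻¹ * Tbar := by rw [← hT']
  -- compute conjugate of 𝒜 * T
  have hrhs : (𝒜 * T).map c = (D⁻¹)ᵀ * (Tᵀ * Acᵀ) * (D⁻¹ * Tbar) := by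
    rw [h𝒜]
    rw [Matrix.map_mul, Matrix.map_mul, Matrix.map_mul, Matrix.map_mul]
    rw [Matrix.transpose_map, Matrix.transpose_map, Matrix.transpose_map]
    rw [hDinvc, hDc, hnegDinv, hTc, hAcc, hTbarc]
    simp only [Matrix.transpose_neg, Matrix.neg_mul, Matrix.mul_neg, neg_neg]
    noncomm_ring
  rw [hrhs, hsymm, h𝒜]
  have hassoc : D⁻¹ᵀ * Tbarᵀ * Acᵀ * D⁻¹ * T = D⁻¹ᵀ * (Tbarᵀ * Acᵀ) * D⁻¹ * T := by
    noncomm_ring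
  rw [hassoc, hsymm']
  calc (D⁻¹)ᵀ * (Ac * Tbar) * D⁻¹ * T
      = (D⁻¹)ᵀ * Ac * (Tbar * D⁻¹ * T) := by noncomm_ring
    _ = (D⁻¹)ᵀ * Ac * (T * D⁻¹ * Tbar) := by rw [hcore]
    _ = (D⁻¹)ᵀ * (Ac * T) * (D⁻¹ * Tbar) := by noncomm_ring
end

section
/- There do not exist invertible $2\times 2$ complex matrices $V_1, V_2, U_1, U_2$ satisfying the six relations $V_1V_2 = V_2V_1$, $U_1U_2 = U_2U_1$, $-U_1V_1 = V_1U_1$, $U_1V_2 = V_2U_1$, $U_2V_1 = V_1U_2$, and $-U_2V_2 = V_2U_2$. (Consequently, in the paper's construction on $\check{T}^4$ the set $\mathcal{U}$ of transition matrices for $(r,A) = (2, I_2)$ is empty, so no holomorphic vector bundle $E_{(r,A,\mu,\mathcal{U})}$ with $(r,A) = (2,I_2)$ exists on $\check{T}^4$.) -/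
/-!
If `U` is invertible and anticommutes with `M`, then `M` is conjugate to `-M`, so `tr M = 0`.
Since `U₁` anticommutes with `V₁` and commutes with `V₂`, it anticommutes with `V₁ V₂`; together
with `U₂` this makes `V₁`, `V₂` and `V₁ V₂` all traceless. For traceless `2 × 2` matrices the
polarised Cayley–Hamilton identity reads `A B + B A = tr (A B) • 1`, so the commuting matrices
`V₁`, `V₂` satisfy `2 V₁ V₂ = 0`, which contradicts their invertibility.
-/

open Matrix

namespace Matrix

theorem mul_add_mul_eq_trace_mul_smul_one_of_trace_eq_zero {R : Type*} [CommRing R]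
    {A B : Matrix (Fin 2) (Fin 2) R} (hA : A.trace = 0) (hB : B.trace = 0) :
    A * B + B * A = (A * B).trace • (1 : Matrix (Fin 2) (Fin 2) R) := by
  have hA₁₁ : A 1 1 = -A 0 0 := by rw [trace_fin_two] at hA; linear_combination hA
  have hB₁₁ : B 1 1 = -B 0 0 := by rw [trace_fin_two] at hB; linear_combination hB
  ext i j
  fin_cases i <;> fin_cases j <;>
    simp only [Fin.zero_eta, Fin.mk_one, Fin.isValue, add_apply, mul_apply, Fin.sum_univ_two,
      trace_fin_two, hA₁₁, hB₁₁, smul_apply, smul_eq_mul, one_apply_eq, one_apply_ne, ne_eq,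
      zero_ne_one, one_ne_zero, not_false_eq_true] <;> ring

variable {K : Type*} [Field K] [NeZero (2 : K)]

theorem trace_eq_zero_of_semiconjBy_neg {n : Type*} [Fintype n] [DecidableEq n]
    {A U : Matrix n n K} (hU : IsUnit U) (h : SemiconjBy A U (-U)) : A.trace = 0 := by
  have hneg : A.trace = -A.trace :=
    calc A.trace = (U⁻¹ * A * U).trace := (trace_conj' hU A).symm
      _ = -(U⁻¹ * U * A).trace := by
        rw [Matrix.mul_assoc, h.eq, neg_mul, Matrix.mul_neg, trace_neg, Matrix.mul_assoc]
      _ = -A.trace := by rw [nonsing_inv_mul _ ((isUnit_iff_isUnit_det U).mp hU), one_mul]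
  have h2 : (2 : K) * A.trace = 0 := by linear_combination hneg
  exact (mul_eq_zero.mp h2).resolve_left two_ne_zero

theorem mul_eq_zero_of_commute_of_trace_eq_zero {A B : Matrix (Fin 2) (Fin 2) K}
    (hA : A.trace = 0) (hB : B.trace = 0) (hAB : (A * B).trace = 0) (hcomm : Commute A B) :
    A * B = 0 := by
  have h2 : (2 : K) • (A * B) = 0 := by
    rw [two_smul]
    nth_rw 2 [hcomm.eq]
    rw [mul_add_mul_eq_trace_mul_smul_one_of_trace_eq_zero hA hB, hAB, zero_smul]
  exact (smul_eq_zero.mp h2).resolve_left two_ne_zero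

end Matrix

/-- Remark 2.1: there are no invertible `2×2` complex matrices `V₁, V₂, U₁, U₂`
satisfying the cocycle relations for `(r,A) = (2, I₂)` on `Ť⁴`. -/
theorem stmt12 :
    ¬ ∃ (V₁ V₂ U₁ U₂ : Matrix (Fin 2) (Fin 2) ℂ),
      IsUnit V₁.det ∧ IsUnit V₂.det ∧ IsUnit U₁.det ∧ IsUnit U₂.det ∧
      V₁ * V₂ = V₂ * V₁ ∧ U₁ * U₂ = U₂ * U₁ ∧
      -(U₁ * V₁) = V₁ * U₁ ∧ U₁ * V₂ = V₂ * U₁ ∧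
      U₂ * V₁ = V₁ * U₂ ∧ -(U₂ * V₂) = V₂ * U₂ := by
  rintro ⟨V₁, V₂, U₁, U₂, hV₁, hV₂, hU₁, hU₂, hV, -, hU₁V₁, hU₁V₂, -, hU₂V₂⟩
  rw [← isUnit_iff_isUnit_det] at hU₁ hU₂
  have anti₁ : SemiconjBy V₁ U₁ (-U₁) := by rw [SemiconjBy, neg_mul, hU₁V₁]
  have anti₂ : SemiconjBy V₂ U₂ (-U₂) := by rw [SemiconjBy, neg_mul, hU₂V₂]
  have hV₁V₂ : V₁ * V₂ = 0 :=
    mul_eq_zero_of_commute_of_trace_eq_zero (trace_eq_zero_of_semiconjBy_neg hU₁ anti₁)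
      (trace_eq_zero_of_semiconjBy_neg hU₂ anti₂)
      (trace_eq_zero_of_semiconjBy_neg hU₁ (anti₁.mul_left hU₁V₂.symm)) hV
  have hdet : V₁.det * V₂.det = 0 := by rw [← det_mul, hV₁V₂, det_zero]
  exact (hV₁.mul hV₂).ne_zero hdet
end

section
/- Let $S$ be a commutative ring, let $X, Y \in S$, let $r, s$ be natural numbers (regarded as elements of $S$), and let $i \ge 2$ be an integer. Then $\Big(r\sum_{k=1}^{i-1}\binom{i-1}{k}r^{i-1-k}s^k\Big)X^i + \Big(s\sum_{k=0}^{i-2}\binom{i-1}{k}r^{i-1-k}s^k\Big)Y^i - \sum_{k=1}^{i-1}\binom{i}{k}(rX)^{i-k}(sY)^k = (X-Y)^2 \cdot \sum_{l=0}^{i-2}\Big(\sum_{k=1}^{l}(i-l-1)\binom{i-1}{k-1}r^{i-k}s^k + (l+1)\sum_{k=l+1}^{i-1}\binom{i-1}{k}r^{i-k}s^k\Big)X^{i-l-2}Y^l$. (Hence whenever $(X-Y)^2 = 0$, the left-hand side vanishes.) -/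
/-!
Write `t = r + s`. By the binomial theorem the left-hand side is the binary form
`F = r t^(i-1) X^i + s t^(i-1) Y^i - (r X + s Y)^i`. A binary form `∑ a_k X^(n-k) Y^k` with
`∑ a_k = 0` is `X - Y` times the form whose coefficients are the partial sums of `a`, so a form
with `∑ a_k = 0` and `∑ (n - k) a_k = 0` is `(X - Y)^2` times the form with coefficients
`∑_{k ≤ l} (l + 1 - k) a_k`. For the coefficients of `F` the identity
`k C(i-1, k) = (i - k) C(i-1, k-1)` turns these iterated partial sums into the stated coefficients,
and for `l = i - 1` into `0`, which is the second vanishing condition.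
-/

open Finset

theorem sum_range_sum_range_succ {M : Type*} [AddCommMonoid M] (a : ℕ → M) (m : ℕ) :
    ∑ j ∈ range m, ∑ k ∈ range (j + 1), a k = ∑ k ∈ range m, (m - k) • a k := by
  induction m with
  | zero => simp
  | succ m ih =>
    rw [sum_range_succ, ih, sum_range_succ a m, sum_range_succ _ m, Nat.add_sub_cancel_left,
      one_smul, ← add_assoc, ← sum_add_distrib]
    congr 1
    refine sum_congr rfl fun k hk => ?_
    rw [Nat.sub_add_comm (by grind), succ_nsmul]

theorem Nat.add_one_mul_choose_eq_sub_mul_add {m l k : ℕ} (hk : 1 ≤ k) (hkl : k ≤ l)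
    (hlm : l ≤ m) :
    (l + 1) * m.choose k = (l + 1 - k) * (m + 1).choose k + (m - l) * m.choose (k - 1) := by
  obtain ⟨j, rfl⟩ : ∃ j, k = j + 1 := ⟨k - 1, by omega⟩
  obtain ⟨p, rfl⟩ : ∃ p, l = j + 1 + p := ⟨l - (j + 1), by omega⟩
  obtain ⟨q, rfl⟩ : ∃ q, m = j + 1 + p + q := ⟨m - (j + 1 + p), by omega⟩
  have h := Nat.choose_succ_right_eq (j + 1 + p + q) j
  rw [Nat.choose_succ_succ]
  simp only [show j + 1 + p + q - j = p + q + 1 by omega,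
    show j + 1 + p + 1 - (j + 1) = p + 1 by omega, show j + 1 + p + q - (j + 1 + p) = q by omega,
    Nat.add_sub_cancel] at h ⊢
  nlinarith

section CommRing

variable {S : Type*} [CommRing S]

theorem sum_mul_pow_eq_sub_mul_add (a : ℕ → S) (X Y : S) (n : ℕ) :
    ∑ k ∈ range (n + 1), a k * X ^ (n - k) * Y ^ k =
      (X - Y) * ∑ l ∈ range n, (∑ k ∈ range (l + 1), a k) * X ^ (n - 1 - l) * Y ^ l
        + (∑ k ∈ range (n + 1), a k) * Y ^ n := by
  induction n with
  | zero => simp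
  | succ n ih =>
    have hX : ∑ k ∈ range (n + 1), a k * X ^ (n + 1 - k) * Y ^ k =
        X * ∑ k ∈ range (n + 1), a k * X ^ (n - k) * Y ^ k := by
      rw [mul_sum]
      refine sum_congr rfl fun k hk => ?_
      rw [Nat.sub_add_comm (by grind), pow_succ]
      ring
    have hX' : ∑ l ∈ range n, (∑ k ∈ range (l + 1), a k) * X ^ (n - l) * Y ^ l =
        X * ∑ l ∈ range n, (∑ k ∈ range (l + 1), a k) * X ^ (n - 1 - l) * Y ^ l := by
      rw [mul_sum]
      refine sum_congr rfl fun l hl => ?_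
      rw [show n - l = n - 1 - l + 1 by grind, pow_succ]
      ring
    rw [sum_range_succ, hX, ih, Nat.add_sub_cancel,
      sum_range_succ (fun l => (∑ k ∈ range (l + 1), a k) * X ^ (n - l) * Y ^ l) n, hX',
      sum_range_succ a (n + 1), sum_range_succ a n]
    simp only [Nat.sub_self, pow_zero]
    ring

theorem sum_mul_pow_eq_sub_sq_mul (a : ℕ → S) (X Y : S) (n : ℕ)
    (h₀ : ∑ k ∈ range (n + 3), a k = 0)
    (h₁ : ∑ k ∈ range (n + 2), (n + 2 - k) • a k = 0) :
    ∑ k ∈ range (n + 3), a k * X ^ (n + 2 - k) * Y ^ k =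
      (X - Y) ^ 2 * ∑ l ∈ range (n + 1),
        (∑ k ∈ range (l + 1), (l + 1 - k) • a k) * X ^ (n - l) * Y ^ l := by
  rw [← sum_range_sum_range_succ] at h₁
  rw [sum_mul_pow_eq_sub_mul_add, h₀, zero_mul, add_zero, show n + 2 - 1 = n + 1 from rfl,
    sum_mul_pow_eq_sub_mul_add, h₁, zero_mul, add_zero, Nat.add_sub_cancel]
  simp only [sum_range_sum_range_succ]
  ring

theorem add_pow_eq_sum_choose (x y : S) (n : ℕ) :
    (x + y) ^ n = ∑ k ∈ range (n + 1), (n.choose k : S) * x ^ (n - k) * y ^ k := by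
  rw [add_comm, add_pow]
  exact sum_congr rfl fun k _ => by ring

theorem sum_range_choose_mul_pow (x y : S) (n : ℕ) :
    ∑ k ∈ range n, (n.choose k : S) * x ^ (n - k) * y ^ k = (x + y) ^ n - y ^ n := by
  simp [add_pow_eq_sum_choose x y n, sum_range_succ]

theorem sum_Icc_choose_mul_pow (x y : S) (n : ℕ) :
    ∑ k ∈ Icc 1 n, (n.choose k : S) * x ^ (n - k) * y ^ k = (x + y) ^ n - x ^ n := by
  simp [add_pow_eq_sum_choose x y n, sum_range_eq_add_Ico _ n.succ_pos, Ico_add_one_right_eq_Icc]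

theorem sum_Icc_sub_one_choose_mul_pow (x y : S) {n : ℕ} (hn : n ≠ 0) :
    ∑ k ∈ Icc 1 (n - 1), (n.choose k : S) * x ^ (n - k) * y ^ k =
      (x + y) ^ n - x ^ n - y ^ n := by
  obtain ⟨m, rfl⟩ := Nat.exists_eq_succ_of_ne_zero hn
  rw [Nat.succ_sub_one, ← sum_Icc_choose_mul_pow, sum_Icc_succ_top (by omega)]
  simp

def defectCoeff (r s : S) (i k : ℕ) : S :=
  (if k = 0 then r * (r + s) ^ (i - 1) else 0) + (if k = i then s * (r + s) ^ (i - 1) else 0)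
    - i.choose k * r ^ (i - k) * s ^ k

theorem sum_defectCoeff_mul_pow (r s X Y : S) (i : ℕ) :
    ∑ k ∈ range (i + 1), defectCoeff r s i k * X ^ (i - k) * Y ^ k =
      r * (r + s) ^ (i - 1) * X ^ i + s * (r + s) ^ (i - 1) * Y ^ i - (r * X + s * Y) ^ i := by
  have hbinom : (r * X + s * Y) ^ i =
      ∑ k ∈ range (i + 1), i.choose k * r ^ (i - k) * s ^ k * X ^ (i - k) * Y ^ k := by
    rw [add_pow_eq_sum_choose]
    exact sum_congr rfl fun k _ => by ring
  simp only [defectCoeff, add_mul, sub_mul, sum_add_distrib, sum_sub_distrib, ite_mul, zero_mul,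
    sum_ite_eq', mem_range, hbinom]
  simp

theorem sum_defectCoeff (r s : S) {i : ℕ} (hi : i ≠ 0) :
    ∑ k ∈ range (i + 1), defectCoeff r s i k = 0 := by
  have h := sum_defectCoeff_mul_pow r s 1 1 i
  simp only [one_pow, mul_one] at h
  rw [h, ← add_mul, ← pow_succ', Nat.sub_add_cancel (Nat.one_le_iff_ne_zero.mpr hi), sub_self]

theorem mul_add_pow_eq_add_sum_Ico (r s : S) {l m : ℕ} (hlm : l ≤ m) :
    r * (r + s) ^ m = r ^ (m + 1) + ∑ k ∈ Ico 1 (l + 1), m.choose k * r ^ (m + 1 - k) * s ^ k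
      + ∑ k ∈ Ico (l + 1) (m + 1), m.choose k * r ^ (m + 1 - k) * s ^ k := by
  rw [add_assoc, sum_Ico_consecutive _ (by omega) (by omega), add_pow_eq_sum_choose, mul_sum,
    sum_range_eq_add_Ico _ (by omega)]
  simp only [pow_zero, Nat.choose_zero_right, Nat.cast_one, Nat.sub_zero, one_mul, mul_one,
    ← pow_succ']
  congr 1
  refine sum_congr rfl fun k hk => ?_
  rw [Nat.sub_add_comm (by grind), pow_succ]
  ring

theorem sum_range_nsmul_defectCoeff (r s : S) {i l : ℕ} (hl : l < i) :
    ∑ k ∈ range (l + 1), (l + 1 - k) • defectCoeff r s i k =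
      ∑ k ∈ Icc 1 l,
          ((i - l - 1 : ℕ) : S) * ((i - 1).choose (k - 1) : S) * r ^ (i - k) * s ^ k
        + ((l + 1 : ℕ) : S) *
          ∑ k ∈ Icc (l + 1) (i - 1), ((i - 1).choose k : S) * r ^ (i - k) * s ^ k := by
  obtain ⟨m, rfl⟩ : ∃ m, i = m + 1 := ⟨i - 1, by omega⟩
  simp only [Nat.add_sub_cancel, show m + 1 - l - 1 = m - l by omega, ← Ico_add_one_right_eq_Icc]
  calc ∑ k ∈ range (l + 1), (l + 1 - k) • defectCoeff r s (m + 1) k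
      = ((l + 1 : ℕ) : S) * (r * (r + s) ^ m - r ^ (m + 1))
          - ∑ k ∈ Ico 1 (l + 1),
              ((l + 1 - k : ℕ) : S) * ((m + 1).choose k * r ^ (m + 1 - k) * s ^ k) := by
        have hterm : ∀ k ∈ Ico 1 (l + 1), (l + 1 - k) • defectCoeff r s (m + 1) k =
            -(((l + 1 - k : ℕ) : S) * ((m + 1).choose k * r ^ (m + 1 - k) * s ^ k)) := by
          intro k hk
          have hk := mem_Ico.mp hk
          simp [defectCoeff, show k ≠ 0 by omega, show k ≠ m + 1 by omega, nsmul_eq_mul]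
        rw [sum_range_eq_add_Ico _ (by omega), sum_congr rfl hterm, sum_neg_distrib]
        simp only [defectCoeff, tsub_zero, ↓reduceIte, add_tsub_cancel_right, Nat.right_eq_add,
          Nat.add_eq_zero_iff, one_ne_zero, and_false, add_zero, Nat.choose_zero_right,
          Nat.cast_one, one_mul, pow_zero, mul_one, nsmul_eq_mul, Nat.cast_add]
        ring
    _ = ∑ k ∈ Ico 1 (l + 1), (((l + 1 : ℕ) : S) * m.choose k
            - ((l + 1 - k : ℕ) : S) * (m + 1).choose k) * r ^ (m + 1 - k) * s ^ k
          + ((l + 1 : ℕ) : S) *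
            ∑ k ∈ Ico (l + 1) (m + 1), (m.choose k : S) * r ^ (m + 1 - k) * s ^ k := by
        rw [mul_add_pow_eq_add_sum_Ico r s (by omega : l ≤ m)]
        simp only [sub_mul, sum_sub_distrib, mul_add, mul_sub, mul_sum, mul_assoc]
        ring
    _ = _ := by
        congr 1
        refine sum_congr rfl fun k hk => ?_
        have hk := mem_Ico.mp hk
        have h := congrArg (Nat.cast : ℕ → S) <|
          Nat.add_one_mul_choose_eq_sub_mul_add hk.1 (Nat.lt_succ_iff.mp hk.2) (by omega : l ≤ m)
        push_cast at h ⊢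
        linear_combination (r ^ (m + 1 - k) * s ^ k) * h

theorem defect_eq_sub_sq_mul (r s X Y : S) (n : ℕ) :
    r * (r + s) ^ (n + 1) * X ^ (n + 2) + s * (r + s) ^ (n + 1) * Y ^ (n + 2)
        - (r * X + s * Y) ^ (n + 2) =
      (X - Y) ^ 2 * ∑ l ∈ range (n + 1),
        (∑ k ∈ range (l + 1), (l + 1 - k) • defectCoeff r s (n + 2) k) * X ^ (n - l) * Y ^ l := by
  have hsum₁ : ∑ k ∈ range (n + 2), (n + 2 - k) • defectCoeff r s (n + 2) k = 0 := by
    rw [sum_range_nsmul_defectCoeff r s (by omega : n + 1 < n + 2)]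
    simp
  rw [← sum_mul_pow_eq_sub_sq_mul _ X Y n (sum_defectCoeff r s (by omega)) hsum₁,
    sum_defectCoeff_mul_pow]
  rfl

end CommRing

/-- The factorization identity behind equation (ci) in the proof of Theorem 4.1:
the degree-`i` Chern character equation factors through `(X-Y)²`. -/
theorem stmt14 {S : Type*} [CommRing S] (X Y : S) (r s : ℕ) (i : ℕ) (hi : 2 ≤ i) :
    ((r : S) * ∑ k ∈ Finset.Icc 1 (i - 1),
        ((i - 1).choose k : S) * (r : S) ^ (i - 1 - k) * (s : S) ^ k) * X ^ i
      + ((s : S) * ∑ k ∈ Finset.range (i - 1),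
        ((i - 1).choose k : S) * (r : S) ^ (i - 1 - k) * (s : S) ^ k) * Y ^ i
      - ∑ k ∈ Finset.Icc 1 (i - 1),
        (i.choose k : S) * ((r : S) * X) ^ (i - k) * ((s : S) * Y) ^ k
    = (X - Y) ^ 2 *
      ∑ l ∈ Finset.range (i - 1),
        ((∑ k ∈ Finset.Icc 1 l,
            ((i - l - 1 : ℕ) : S) * ((i - 1).choose (k - 1) : S) * (r : S) ^ (i - k) * (s : S) ^ k)
          + ((l + 1 : ℕ) : S) * ∑ k ∈ Finset.Icc (l + 1) (i - 1),
            ((i - 1).choose k : S) * (r : S) ^ (i - k) * (s : S) ^ k)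
        * X ^ (i - l - 2) * Y ^ l := by
  rw [sum_Icc_choose_mul_pow, sum_range_choose_mul_pow,
    sum_Icc_sub_one_choose_mul_pow _ _ (by omega : i ≠ 0)]
  obtain ⟨n, rfl⟩ := Nat.exists_eq_add_of_le' hi
  rw [show n + 2 - 1 = n + 1 from rfl]
  calc _ = (r : S) * (r + s) ^ (n + 1) * X ^ (n + 2) + s * (r + s) ^ (n + 1) * Y ^ (n + 2)
          - (r * X + s * Y) ^ (n + 2) := by ring
    _ = _ := defect_eq_sub_sq_mul _ _ X Y n
    _ = _ := by
      refine congrArg _ (sum_congr rfl fun l hl => ?_)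
      rw [sum_range_nsmul_defectCoeff _ _ (by grind), show n + 2 - 1 = n + 1 from rfl,
        show n + 2 - l - 2 = n - l by omega]
end
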